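/- The tilted weight tends to one at infinity: if α* > 1/2, then for every ε > 0 there exists M > 0 such that for every θ with |θ| ≥ M and every a ∈ (0,1) with G(θ, a) = α*, one has a > 1 - ε. -/

import Mathlib

open MeasureTheory

/-- The standard Gaussian density. -/
noncomputable def stdGauss (y : ℝ) : ℝ :=
  (Real.sqrt (2 * Real.pi))⁻¹ * Real.exp (-y ^ 2 / 2)

/-- Density of the two-component mixture `α*·N(θ*,1) + (1-α*)·N(-θ*,1)`. -/
noncomputable def mixDen (θs αs y : ℝ) : ℝ :=
  αs * stdGauss (y - θs) + (1 - αs) * stdGauss (y + θs)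

/-- The EM/Sinkhorn-EM map `F(θ, α)`. -/
noncomputable def Fmap (θs αs θ α : ℝ) : ℝ :=
  ∫ y, y * (α * Real.exp (θ * y) - (1 - α) * Real.exp (-(θ * y))) /
      (α * Real.exp (θ * y) + (1 - α) * Real.exp (-(θ * y))) * mixDen θs αs y

/-- The tilting equation map `G(θ, α)`. -/
noncomputable def Gmap (θs αs θ α : ℝ) : ℝ :=
  ∫ y, α * Real.exp (θ * y) /
      (α * Real.exp (θ * y) + (1 - α) * Real.exp (-(θ * y))) * mixDen θs αs y

/-- The (normalized) `θ`-derivative of the tilting equation, `G_θ(θ, α)`. -/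
noncomputable def Gtheta (θs αs θ α : ℝ) : ℝ :=
  ∫ y, y / (α * Real.exp (θ * y) + (1 - α) * Real.exp (-(θ * y))) ^ 2 * mixDen θs αs y

/-!
Write `G(θ, a) = ∫ w_a(θ y) q*(y) dy` with the logistic weight
`w_a(u) = a eᵘ / (a eᵘ + (1 - a) e⁻ᵘ)`, which is increasing with values in `[0, 1]`.
For `θ ≥ 0` and `δ ≥ 0` the weight is at most `w_a(-θδ)` on `{y ≤ -δ}`, and `q* ≤ 1`, so
`G(θ, a) ≤ P(Y > 0) + δ + w_a(-θδ)`. Since `P(Y > 0) < α*` when `α* > 1/2`, the equation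
`G(θ, a) = α*` forces `w_a(-θc) ≥ c` for some fixed `c > 0`, and inverting the logistic weight
gives `1 - a ≤ e^{-2θc} / c`. The reflection `y ↦ -y` turns negative `θ` into positive ones,
at the price of replacing `θ*` by `-θ*`.
-/

open Real Set Filter Topology ProbabilityTheory

noncomputable def tiltedWeight (a u : ℝ) : ℝ :=
  a * exp u / (a * exp u + (1 - a) * exp (-u))

section TiltedWeight

variable {a : ℝ}

lemma tiltedWeight_denom_pos (ha : a ∈ Icc 0 1) (u : ℝ) :
    0 < a * exp u + (1 - a) * exp (-u) := by
  obtain ⟨ha0, ha1⟩ := ha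
  rcases ha0.lt_or_eq with ha0 | rfl
  · nlinarith [exp_pos u, exp_pos (-u)]
  · simpa using exp_pos (-u)

lemma tiltedWeight_nonneg (ha : a ∈ Icc 0 1) (u : ℝ) : 0 ≤ tiltedWeight a u :=
  div_nonneg (mul_nonneg ha.1 (exp_pos u).le) (tiltedWeight_denom_pos ha u).le

lemma tiltedWeight_le_one (ha : a ∈ Icc 0 1) (u : ℝ) : tiltedWeight a u ≤ 1 := by
  rw [tiltedWeight, div_le_one (tiltedWeight_denom_pos ha u)]
  nlinarith [ha.2, exp_pos (-u)]

lemma monotone_tiltedWeight (ha : a ∈ Icc 0 1) : Monotone (tiltedWeight a) := by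
  intro u v huv
  rw [tiltedWeight, tiltedWeight,
    div_le_div_iff₀ (tiltedWeight_denom_pos ha u) (tiltedWeight_denom_pos ha v)]
  have key : exp u * exp (-v) ≤ exp v * exp (-u) := by
    rw [← exp_add, ← exp_add]
    exact exp_le_exp.2 (by linarith)
  nlinarith [mul_le_mul_of_nonneg_left key (mul_nonneg ha.1 (sub_nonneg.2 ha.2))]

lemma continuous_tiltedWeight (ha : a ∈ Icc 0 1) : Continuous (tiltedWeight a) := by
  unfold tiltedWeight
  exact Continuous.div (by fun_prop) (by fun_prop) fun u => (tiltedWeight_denom_pos ha u).ne'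

lemma one_sub_le_of_le_tiltedWeight_neg {η u : ℝ} (ha : a ∈ Icc 0 1) (hη : 0 < η)
    (h : η ≤ tiltedWeight a (-u)) : 1 - a ≤ exp (-(2 * u)) / η := by
  have hden := tiltedWeight_denom_pos ha (-u)
  rw [tiltedWeight, le_div_iff₀ hden, neg_neg] at h
  have hexp : exp (-(2 * u)) * exp u = exp (-u) := by rw [← exp_add]; ring_nf
  rw [le_div_iff₀ hη, ← mul_le_mul_iff_left₀ (exp_pos u), hexp]
  have := exp_pos (-u)
  nlinarith [mul_nonneg (mul_nonneg hη.le ha.1) this.le, mul_nonneg (sub_nonneg.2 ha.2) this.le]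

end TiltedWeight

section Density

variable {q : ℝ → ℝ}

lemma integral_tiltedWeight_mul_le {a θ : ℝ} (δ : ℝ) (ha : a ∈ Icc 0 1) (hθ : 0 ≤ θ)
    (hq0 : ∀ y, 0 ≤ q y) (hq : Integrable q) :
    ∫ y, tiltedWeight a (θ * y) * q y
      ≤ (∫ y in Ioi (-δ), q y) + tiltedWeight a (-(θ * δ)) * ∫ y, q y := by
  set s := tiltedWeight a (-(θ * δ))
  have hpointwise : ∀ y, tiltedWeight a (θ * y) * q y ≤ (Ioi (-δ)).indicator q y + s * q y := by
    intro y
    by_cases hy : y ∈ Ioi (-δ)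
    · rw [indicator_of_mem hy]
      nlinarith [tiltedWeight_le_one ha (θ * y), tiltedWeight_nonneg ha (-(θ * δ)), hq0 y]
    · rw [indicator_of_notMem hy, zero_add]
      have hθy : θ * y ≤ -(θ * δ) := by nlinarith [not_lt.1 (mem_Ioi.not.1 hy)]
      exact mul_le_mul_of_nonneg_right (monotone_tiltedWeight ha hθy) (hq0 y)
  have hint : Integrable fun y => tiltedWeight a (θ * y) * q y :=
    hq.bdd_mul ((continuous_tiltedWeight ha).comp (continuous_const_mul θ)).aestronglyMeasurable
      (c := 1) (Eventually.of_forall fun y => by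
        rw [norm_of_nonneg (tiltedWeight_nonneg ha _)]
        exact tiltedWeight_le_one ha _)
  calc ∫ y, tiltedWeight a (θ * y) * q y
      ≤ ∫ y, (Ioi (-δ)).indicator q y + s * q y :=
        integral_mono hint ((hq.indicator measurableSet_Ioi).add (hq.const_mul s)) hpointwise
    _ = (∫ y in Ioi (-δ), q y) + s * ∫ y, q y := by
        rw [integral_add (hq.indicator measurableSet_Ioi) (hq.const_mul s),
          integral_indicator measurableSet_Ioi, integral_const_mul]

lemma setIntegral_Ioi_neg_le {C δ : ℝ} (hq : Integrable q) (hC : ∀ y, q y ≤ C) (hδ : 0 ≤ δ) :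
    ∫ y in Ioi (-δ), q y ≤ (∫ y in Ioi 0, q y) + C * δ := by
  have hsplit : ∫ y in Ioi (-δ), q y = (∫ y in Ioc (-δ) 0, q y) + ∫ y in Ioi 0, q y := by
    rw [← setIntegral_union (Ioc_disjoint_Ioi le_rfl) measurableSet_Ioi hq.integrableOn
      hq.integrableOn, Ioc_union_Ioi_eq_Ioi (by linarith)]
  have hsmall : ∫ y in Ioc (-δ) 0, q y ≤ C * δ := by
    calc ∫ y in Ioc (-δ) 0, q y ≤ ∫ _ in Ioc (-δ) 0, C :=
          setIntegral_mono_on hq.integrableOn (integrableOn_const (by simp)) measurableSet_Ioc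
            fun y _ => hC y
      _ = C * δ := by
          rw [setIntegral_const, Real.volume_real_Ioc_of_le (by linarith), smul_eq_mul]
          ring
  linarith

end Density

section Mixture

lemma stdGauss_sub (m y : ℝ) : stdGauss (y - m) = gaussianPDFReal m 1 y := by
  simp [stdGauss, gaussianPDFReal]

lemma gaussianPDFReal_neg (m y : ℝ) (v : NNReal) :
    gaussianPDFReal (-m) v (-y) = gaussianPDFReal m v y := by
  simp only [gaussianPDFReal]
  ring_nf

lemma gaussianPDFReal_one_le_one (m y : ℝ) : gaussianPDFReal m 1 y ≤ 1 := by
  have hsqrt : 1 ≤ √(2 * π * ((1 : NNReal) : ℝ)) := by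
    rw [NNReal.coe_one, mul_one, Real.one_le_sqrt]
    linarith [pi_gt_three]
  have hexp : exp (-(y - m) ^ 2 / (2 * ((1 : NNReal) : ℝ))) ≤ 1 :=
    exp_le_one_iff.2 (by simp only [NNReal.coe_one]; nlinarith [sq_nonneg (y - m)])
  exact mul_le_one₀ (inv_le_one_of_one_le₀ hsqrt) (exp_pos _).le hexp

lemma setIntegral_Ioi_gaussianPDFReal_lt_one (m : ℝ) :
    ∫ y in Ioi 0, gaussianPDFReal m 1 y < 1 := by
  have hsum := integral_add_compl (measurableSet_Iic (a := (0 : ℝ)))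
    (integrable_gaussianPDFReal m 1)
  rw [compl_Iic, integral_gaussianPDFReal_eq_one m one_ne_zero] at hsum
  have hpos : 0 < ∫ y in Iic 0, gaussianPDFReal m 1 y := by
    rw [setIntegral_pos_iff_support_of_nonneg_ae
      (Eventually.of_forall fun y => gaussianPDFReal_nonneg m 1 y)
      (integrable_gaussianPDFReal m 1).integrableOn]
    have : Function.support (gaussianPDFReal m 1) = univ :=
      Function.support_eq_univ fun y => (gaussianPDFReal_pos m 1 y one_ne_zero).ne'
    simp [this]
  linarith

lemma setIntegral_Ioi_gaussianPDFReal_neg (m : ℝ) :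
    ∫ y in Ioi 0, gaussianPDFReal (-m) 1 y = 1 - ∫ y in Ioi 0, gaussianPDFReal m 1 y := by
  have hsum := integral_add_compl (measurableSet_Iic (a := (0 : ℝ)))
    (integrable_gaussianPDFReal m 1)
  rw [compl_Iic, integral_gaussianPDFReal_eq_one m one_ne_zero] at hsum
  have hrefl : ∫ y in Ioi 0, gaussianPDFReal (-m) 1 y = ∫ y in Iic 0, gaussianPDFReal m 1 y :=
    calc ∫ y in Ioi 0, gaussianPDFReal (-m) 1 y = ∫ y in Ioi 0, gaussianPDFReal m 1 (-y) := by
          simp_rw [← gaussianPDFReal_neg m, neg_neg]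
      _ = ∫ y in Iic 0, gaussianPDFReal m 1 y := by rw [integral_comp_neg_Ioi, neg_zero]
  linarith

variable (θs : ℝ) {αs : ℝ}

lemma mixDen_eq (y : ℝ) :
    mixDen θs αs y = αs * gaussianPDFReal θs 1 y + (1 - αs) * gaussianPDFReal (-θs) 1 y := by
  rw [mixDen, stdGauss_sub, ← sub_neg_eq_add y θs, stdGauss_sub]

lemma mixDen_neg (y : ℝ) : mixDen θs αs (-y) = mixDen (-θs) αs y := by
  rw [mixDen_eq, mixDen_eq, neg_neg, ← gaussianPDFReal_neg θs y, ← gaussianPDFReal_neg (-θs) y,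
    neg_neg]

lemma integrable_mixDen : Integrable (mixDen θs αs) := by
  simp_rw [funext (mixDen_eq θs (αs := αs))]
  exact ((integrable_gaussianPDFReal _ _).const_mul _).add
    ((integrable_gaussianPDFReal _ _).const_mul _)

lemma integral_mixDen : ∫ y, mixDen θs αs y = 1 := by
  simp_rw [mixDen_eq]
  rw [integral_add ((integrable_gaussianPDFReal _ _).const_mul _)
      ((integrable_gaussianPDFReal _ _).const_mul _), integral_const_mul, integral_const_mul,
    integral_gaussianPDFReal_eq_one _ one_ne_zero, integral_gaussianPDFReal_eq_one _ one_ne_zero]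
  ring

variable (hαs : αs ∈ Icc 0 1)
include hαs

lemma mixDen_nonneg (y : ℝ) : 0 ≤ mixDen θs αs y := by
  rw [mixDen_eq]
  have := gaussianPDFReal_nonneg θs 1 y
  have := gaussianPDFReal_nonneg (-θs) 1 y
  nlinarith [hαs.1, hαs.2]

lemma mixDen_le_one (y : ℝ) : mixDen θs αs y ≤ 1 := by
  rw [mixDen_eq]
  nlinarith [hαs.1, hαs.2, gaussianPDFReal_one_le_one θs y, gaussianPDFReal_one_le_one (-θs) y]

end Mixture

lemma Gmap_eq_integral_tiltedWeight (θs αs θ a : ℝ) :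
    Gmap θs αs θ a = ∫ y, tiltedWeight a (θ * y) * mixDen θs αs y := rfl

lemma Gmap_neg (θs αs θ a : ℝ) : Gmap θs αs (-θ) a = Gmap (-θs) αs θ a := by
  rw [Gmap_eq_integral_tiltedWeight, Gmap_eq_integral_tiltedWeight,
    ← integral_neg_eq_self]
  simp_rw [mixDen_neg, neg_mul_neg]

lemma Gmap_le {θs αs θ a : ℝ} (δ : ℝ) (hαs : αs ∈ Icc 0 1) (hθ : 0 ≤ θ) (ha : a ∈ Icc 0 1)
    (hδ : 0 ≤ δ) :
    Gmap θs αs θ a ≤ (∫ y in Ioi 0, mixDen θs αs y) + δ + tiltedWeight a (-(θ * δ)) := by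
  have h := integral_tiltedWeight_mul_le δ ha hθ (mixDen_nonneg θs hαs) (integrable_mixDen θs)
  have htail := setIntegral_Ioi_neg_le (integrable_mixDen θs) (mixDen_le_one θs hαs) hδ
  rw [integral_mixDen, mul_one] at h
  rw [one_mul] at htail
  rw [Gmap_eq_integral_tiltedWeight]
  linarith

lemma setIntegral_Ioi_mixDen_lt (θs : ℝ) {αs : ℝ} (hαs : 1 / 2 < αs) :
    ∫ y in Ioi 0, mixDen θs αs y < αs := by
  simp_rw [mixDen_eq]
  rw [integral_add ((integrable_gaussianPDFReal _ _).integrableOn.const_mul _)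
      ((integrable_gaussianPDFReal _ _).integrableOn.const_mul _), integral_const_mul,
    integral_const_mul, setIntegral_Ioi_gaussianPDFReal_neg]
  nlinarith [setIntegral_Ioi_gaussianPDFReal_lt_one θs]

lemma le_tiltedWeight_of_Gmap_eq {θs αs θ a c : ℝ} (hαs : αs ∈ Icc 0 1) (hθ : 0 ≤ θ)
    (ha : a ∈ Icc 0 1) (hc : 0 ≤ c) (hgap : 2 * c ≤ αs - ∫ y in Ioi 0, mixDen θs αs y)
    (hG : Gmap θs αs θ a = αs) : c ≤ tiltedWeight a (-(θ * c)) := by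
  have := Gmap_le (θs := θs) c hαs hθ ha hc
  linarith

lemma exists_le_tiltedWeight_of_Gmap_eq (θs : ℝ) {αs : ℝ} (hαs : 1 / 2 < αs) (hαs1 : αs ≤ 1) :
    ∃ c > 0, ∀ θ a, a ∈ Icc 0 1 → Gmap θs αs θ a = αs → c ≤ tiltedWeight a (-(|θ| * c)) := by
  have hαs' : αs ∈ Icc 0 1 := ⟨by linarith, hαs1⟩
  have hpos := setIntegral_Ioi_mixDen_lt θs hαs
  have hneg := setIntegral_Ioi_mixDen_lt (-θs) hαs
  obtain ⟨c, hc, hcpos, hcneg⟩ : ∃ c > 0, 2 * c ≤ αs - ∫ y in Ioi 0, mixDen θs αs y ∧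
      2 * c ≤ αs - ∫ y in Ioi 0, mixDen (-θs) αs y :=
    ⟨min (αs - ∫ y in Ioi 0, mixDen θs αs y) (αs - ∫ y in Ioi 0, mixDen (-θs) αs y) / 2,
      half_pos (lt_min (by linarith) (by linarith)),
      (mul_div_cancel₀ _ two_ne_zero).trans_le (min_le_left _ _),
      (mul_div_cancel₀ _ two_ne_zero).trans_le (min_le_right _ _)⟩
  refine ⟨c, hc, fun θ a ha hG => ?_⟩
  rcases le_or_gt 0 θ with hθ | hθ
  · rw [abs_of_nonneg hθ]
    exact le_tiltedWeight_of_Gmap_eq hαs' hθ ha hc.le hcpos hG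
  · rw [abs_of_neg hθ]
    rw [← neg_neg θ, Gmap_neg] at hG
    exact le_tiltedWeight_of_Gmap_eq hαs' (neg_nonneg.2 hθ.le) ha hc.le hcneg hG

theorem tilted_weight_tendsto_one_general
    (θs αs : ℝ) (hαs : 1 / 2 < αs) (hαs1 : αs < 1) :
    ∀ ε > (0 : ℝ), ∃ M > (0 : ℝ), ∀ θ : ℝ, M ≤ |θ| →
      ∀ a ∈ Set.Ioo (0 : ℝ) 1, Gmap θs αs θ a = αs → 1 - ε < a := by
  intro ε hε
  obtain ⟨c, hc, hweight⟩ := exists_le_tiltedWeight_of_Gmap_eq θs hαs hαs1.le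
  have hdecay : Tendsto (fun t => exp (-(2 * (t * c))) / c) atTop (𝓝 0) := by
    have h := (tendsto_exp_atBot.comp (tendsto_neg_atTop_atBot.comp
      ((tendsto_id.atTop_mul_const hc).const_mul_atTop two_pos))).div_const c
    rwa [zero_div] at h
  obtain ⟨M, hM⟩ := eventually_atTop.1 (hdecay.eventually (gt_mem_nhds hε))
  refine ⟨max M 1, by positivity, fun θ hθ a ha hG => ?_⟩
  have hIcc : a ∈ Icc 0 1 := Ioo_subset_Icc_self ha
  have h := one_sub_le_of_le_tiltedWeight_neg hIcc hc (hweight θ a hIcc hG)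
  linarith [hM |θ| ((le_max_left M 1).trans hθ)]

/-- the tilted weight tends to one at infinity: for every `ε > 0`
there is `M > 0` such that whenever `|θ| ≥ M` and `a ∈ (0,1)` solves
`G(θ, a) = α*`, one has `a > 1 - ε`. -/
theorem tilted_weight_tendsto_one
    (θs αs : ℝ) (hθs : 0 < θs) (hαs : 1 / 2 < αs) (hαs1 : αs < 1) :
    ∀ ε > (0 : ℝ), ∃ M > (0 : ℝ), ∀ θ : ℝ, M ≤ |θ| →
      ∀ a ∈ Set.Ioo (0 : ℝ) 1, Gmap θs αs θ a = αs → 1 - ε < a :=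
  tilted_weight_tendsto_one_general θs αs hαs hαs1
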